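/- arXiv:1602.02063 — 2 statements merged into one kernel-verified Lean document; each statement's English description precedes it below -/
import Mathlib

section
/- Let C ≥ 1, 0 ≤ a ≤ ⌈C/2⌉, and 0 ≤ b ≤ ⌊C/2⌋ be integers. Consider the team competition Γ^C_{a,b} with m = n = (C−a) + (⌊C/2⌋−b) players on each side, T = C−a−b rounds, P i j = 1 if i = j ≤ C−a and P i j = 0 otherwise, and utility U(t) = 1 if t ≥ ⌈C/2⌉−a and U(t) = −1 otherwise. Then the value of Γ^C_{a,b} is strictly greater than −1; i.e., Team 1 can guarantee an expected utility larger than −1. -/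
/-- Value function of the team competition `G(T,P,U)`, by backward induction.
`gval m n P U r X Y w` is the value of the state where the players in `X` (Team 1)
and `Y` (Team 2) have already played, Team 1 has won `w` rounds so far, and
`r = T - |X|` rounds remain to be played.  The value of the whole game is
`gval m n P U T ∅ ∅ 0`. -/
noncomputable def gval (m n : ℕ) (P : Fin m → Fin n → ℝ) (U : ℕ → ℝ) :
    ℕ → Finset (Fin m) → Finset (Fin n) → ℕ → ℝ
  | 0, _, _, w => U w
  | r + 1, X, Y, w =>
      sSup {v : ℝ | ∃ p : Fin m → ℝ,
        (∀ i, 0 ≤ p i) ∧ (∀ i ∈ X, p i = 0) ∧ (∑ i, p i) = 1 ∧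
        v = sInf {u : ℝ | ∃ j, j ∉ Y ∧
          u = ∑ i, p i *
            (P i j * gval m n P U r (insert i X) (insert j Y) (w + 1) +
             (1 - P i j) * gval m n P U r (insert i X) (insert j Y) w)}}

/-!
Team 1 plays uniformly at random among its remaining players; with probability at least `1/m`
it answers Team 2's player `j` with its own player `j`. Along the line where it always does so,
each round is either won (`j < C - a`) or costs Team 2 one of its `⌊C/2⌋ - b` unbeatable players,
and `T = C - a - b = (⌈C/2⌉ - a) + (⌊C/2⌋ - b)`, so this line ends with at least `⌈C/2⌉ - a` wins.
It has probability at least `m ^ (-T)` against every strategy of Team 2, whence the value is at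
least `-1 + 2 m ^ (-T)`.
-/

open Finset

theorem Real.sSup_mem_Icc_of_subset {s : Set ℝ} {a b : ℝ} (ha : a ≤ 0) (hb : 0 ≤ b)
    (hs : s ⊆ Set.Icc a b) : sSup s ∈ Set.Icc a b := by
  refine ⟨?_, Real.sSup_le (fun x hx => (hs hx).2) hb⟩
  rcases s.eq_empty_or_nonempty with rfl | ⟨x, hx⟩
  · simpa using ha
  · exact (hs hx).1.trans (le_csSup ⟨b, fun y hy => (hs hy).2⟩ hx)

theorem Real.sInf_mem_Icc_of_subset {s : Set ℝ} {a b : ℝ} (ha : a ≤ 0) (hb : 0 ≤ b)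
    (hs : s ⊆ Set.Icc a b) : sInf s ∈ Set.Icc a b := by
  refine ⟨Real.le_sInf (fun x hx => (hs hx).1) ha, ?_⟩
  rcases s.eq_empty_or_nonempty with rfl | ⟨x, hx⟩
  · simpa using hb
  · exact (csInf_le ⟨a, fun y hy => (hs hy).1⟩ hx).trans (hs hx).2

theorem add_div_card_le_inv_card_mul_sum {ι : Type*} {s : Finset ι} {g : ι → ℝ} {l ε : ℝ}
    {i₀ : ι} (hg : ∀ i ∈ s, l ≤ g i) (hi₀ : i₀ ∈ s) (hgi₀ : l + ε ≤ g i₀) :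
    l + ε / #s ≤ (#s : ℝ)⁻¹ * ∑ i ∈ s, g i := by
  have hs : (0 : ℝ) < #s := by exact_mod_cast card_pos.mpr ⟨i₀, hi₀⟩
  have hexcess : ε ≤ ∑ i ∈ s, (g i - l) :=
    (le_sub_iff_add_le'.mpr hgi₀).trans
      (single_le_sum (fun i hi => sub_nonneg.mpr (hg i hi)) hi₀)
  rw [sum_sub_distrib, sum_const, nsmul_eq_mul] at hexcess
  rw [le_inv_mul_iff₀ hs, mul_add, mul_div_cancel₀ _ hs.ne']
  linarith

section GeneralGame

variable {m n : ℕ} (P : Fin m → Fin n → ℝ) (U : ℕ → ℝ)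

noncomputable def stagePayoff (r : ℕ) (X : Finset (Fin m)) (Y : Finset (Fin n)) (w : ℕ)
    (i : Fin m) (j : Fin n) : ℝ :=
  P i j * gval m n P U r (insert i X) (insert j Y) (w + 1) +
    (1 - P i j) * gval m n P U r (insert i X) (insert j Y) w

theorem gval_succ (r : ℕ) (X : Finset (Fin m)) (Y : Finset (Fin n)) (w : ℕ) :
    gval m n P U (r + 1) X Y w =
      sSup {v : ℝ | ∃ p : Fin m → ℝ, (∀ i, 0 ≤ p i) ∧ (∀ i ∈ X, p i = 0) ∧ ∑ i, p i = 1 ∧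
        v = sInf {u : ℝ | ∃ j, j ∉ Y ∧ u = ∑ i, p i * stagePayoff P U r X Y w i j}} := by
  rw [gval]; rfl

variable {P U}

theorem stagePayoff_mem_Icc (hP : ∀ i j, P i j ∈ Set.Icc 0 1) {r : ℕ}
    (hV : ∀ X Y w, gval m n P U r X Y w ∈ Set.Icc (-1) 1)
    (X : Finset (Fin m)) (Y : Finset (Fin n)) (w : ℕ) (i : Fin m) (j : Fin n) :
    stagePayoff P U r X Y w i j ∈ Set.Icc (-1) 1 := by
  have h := convex_Icc (-1 : ℝ) 1 (hV (insert i X) (insert j Y) (w + 1))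
    (hV (insert i X) (insert j Y) w) (hP i j).1
    (sub_nonneg.mpr (hP i j).2) (add_sub_cancel _ _)
  simpa only [smul_eq_mul, stagePayoff] using h

theorem strategyValues_subset_Icc (hP : ∀ i j, P i j ∈ Set.Icc 0 1) {r : ℕ}
    (hV : ∀ X Y w, gval m n P U r X Y w ∈ Set.Icc (-1) 1)
    (X : Finset (Fin m)) (Y : Finset (Fin n)) (w : ℕ) :
    {v : ℝ | ∃ p : Fin m → ℝ, (∀ i, 0 ≤ p i) ∧ (∀ i ∈ X, p i = 0) ∧ ∑ i, p i = 1 ∧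
        v = sInf {u : ℝ | ∃ j, j ∉ Y ∧ u = ∑ i, p i * stagePayoff P U r X Y w i j}} ⊆
      Set.Icc (-1) 1 := by
  rintro v ⟨p, hp0, -, hp1, rfl⟩
  refine Real.sInf_mem_Icc_of_subset (by norm_num) zero_le_one ?_
  rintro u ⟨j, -, rfl⟩
  exact (convex_Icc (-1 : ℝ) 1).sum_mem (fun i _ => hp0 i) hp1
    (fun i _ => stagePayoff_mem_Icc hP hV X Y w i j)

theorem gval_mem_Icc (hP : ∀ i j, P i j ∈ Set.Icc 0 1) (hU : ∀ t, U t ∈ Set.Icc (-1) 1) :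
    ∀ r X Y w, gval m n P U r X Y w ∈ Set.Icc (-1) 1
  | 0, _, _, w => by rw [gval]; exact hU w
  | r + 1, X, Y, w => by
    rw [gval_succ]
    exact Real.sSup_mem_Icc_of_subset (by norm_num) zero_le_one
      (strategyValues_subset_Icc hP (gval_mem_Icc hP hU r) X Y w)

theorem le_gval_succ_of_strategy (hP : ∀ i j, P i j ∈ Set.Icc 0 1)
    (hU : ∀ t, U t ∈ Set.Icc (-1) 1) {r : ℕ} {X : Finset (Fin m)} {Y : Finset (Fin n)} {w : ℕ}
    {p : Fin m → ℝ} {v : ℝ} (hp0 : ∀ i, 0 ≤ p i) (hpX : ∀ i ∈ X, p i = 0) (hp1 : ∑ i, p i = 1)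
    (hY : ∃ j, j ∉ Y) (hv : ∀ j ∉ Y, v ≤ ∑ i, p i * stagePayoff P U r X Y w i j) :
    v ≤ gval m n P U (r + 1) X Y w := by
  have hsub := strategyValues_subset_Icc hP (gval_mem_Icc hP hU r) X Y w
  rw [gval_succ]
  obtain ⟨j₀, hj₀⟩ := hY
  refine le_trans ?_ (le_csSup ⟨1, fun x hx => (hsub hx).2⟩ ⟨p, hp0, hpX, hp1, rfl⟩)
  refine le_csInf ⟨_, j₀, hj₀, rfl⟩ ?_
  rintro u ⟨j, hj, rfl⟩
  exact hv j hj

/-- Witnessed by the uniform strategy on Team 1's remaining players: the answering player is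
drawn with probability `1 / #Xᶜ ≥ 1 / m`, and every other one still secures `-1`. -/
theorem neg_one_add_div_le_gval_succ (hP : ∀ i j, P i j ∈ Set.Icc 0 1)
    (hU : ∀ t, U t ∈ Set.Icc (-1) 1) {r : ℕ} {X : Finset (Fin m)} {Y : Finset (Fin n)} {w : ℕ}
    {ε : ℝ} (hε : 0 ≤ ε) (hY : ∃ j, j ∉ Y)
    (hresp : ∀ j ∉ Y, ∃ i ∉ X, -1 + ε ≤ stagePayoff P U r X Y w i j) :
    -1 + ε / m ≤ gval m n P U (r + 1) X Y w := by
  obtain ⟨j₀, hj₀⟩ := hY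
  obtain ⟨i₀, hi₀, -⟩ := hresp j₀ hj₀
  have hcard : (0 : ℝ) < #Xᶜ := by exact_mod_cast card_pos.mpr ⟨i₀, mem_compl.mpr hi₀⟩
  set p : Fin m → ℝ := fun i => if i ∈ Xᶜ then (#Xᶜ : ℝ)⁻¹ else 0 with hp
  have hpsum (g : Fin m → ℝ) : ∑ i, p i * g i = (#Xᶜ : ℝ)⁻¹ * ∑ i ∈ Xᶜ, g i := by
    simp only [hp, ite_mul, zero_mul, sum_ite_mem, univ_inter, mul_sum]
  refine le_gval_succ_of_strategy hP hU (p := p) (fun i => by positivity)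
    (fun i hi => if_neg (notMem_compl.mpr hi)) ?_ ⟨j₀, hj₀⟩ fun j hj => ?_
  · simpa [hcard.ne'] using hpsum 1
  obtain ⟨i, hiX, hi⟩ := hresp j hj
  calc -1 + ε / m ≤ -1 + ε / #Xᶜ := by
        gcongr
        simpa using card_le_univ Xᶜ
    _ ≤ (#Xᶜ : ℝ)⁻¹ * ∑ i ∈ Xᶜ, stagePayoff P U r X Y w i j :=
        add_div_card_le_inv_card_mul_sum
          (fun i _ => (stagePayoff_mem_Icc hP (gval_mem_Icc hP hU r) X Y w i j).1)
          (mem_compl.mpr hiX) hi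
    _ = ∑ i, p i * stagePayoff P U r X Y w i j := (hpsum _).symm

end GeneralGame

section Gamma

def gammaWinProb (m K : ℕ) (i j : Fin m) : ℝ := if (i : ℕ) = j ∧ (i : ℕ) < K then 1 else 0

def gammaUtility (θ t : ℕ) : ℝ := if θ ≤ t then 1 else -1

variable {m : ℕ} (K θ : ℕ)

/-- On Team 2, the players `j` with `K ≤ j` are the ones nobody can beat. -/
def unplayedDummies (X : Finset (Fin m)) : ℕ := #{x ∈ Xᶜ | K ≤ x.val}

theorem gammaWinProb_mem_Icc (i j : Fin m) : gammaWinProb m K i j ∈ Set.Icc 0 1 := by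
  unfold gammaWinProb; split_ifs <;> norm_num

theorem gammaUtility_mem_Icc (t : ℕ) : gammaUtility θ t ∈ Set.Icc (-1) 1 := by
  unfold gammaUtility; split_ifs <;> norm_num

theorem unplayedDummies_empty : unplayedDummies K (∅ : Finset (Fin m)) = m - K := by
  have h := card_filter_add_card_filter_not (s := univ) fun x : Fin m => (x : ℕ) < K
  simp only [not_lt, card_univ, Fintype.card_fin, Fin.card_filter_val_lt] at h
  rw [unplayedDummies, compl_empty]
  omega

theorem unplayedDummies_insert_le (X : Finset (Fin m)) (j : Fin m) :
    unplayedDummies K (insert j X) ≤ unplayedDummies K X :=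
  card_le_card (filter_subset_filter _ (compl_subset_compl.mpr (subset_insert j X)))

theorem unplayedDummies_insert_lt {X : Finset (Fin m)} {j : Fin m} (hj : K ≤ (j : ℕ))
    (hjX : j ∉ X) : unplayedDummies K (insert j X) < unplayedDummies K X := by
  rw [unplayedDummies, unplayedDummies, compl_insert, filter_erase]
  exact card_erase_lt_of_mem (mem_filter.mpr ⟨mem_compl.mpr hjX, hj⟩)

/-- Along the line where Team 1 answers every player with its own copy, both teams have used the
same set `X`, and each round preserves `θ + unplayedDummies K X ≤ w + r`. -/
theorem neg_one_add_two_div_pow_le_gval_gamma :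
    ∀ (r w : ℕ) (X : Finset (Fin m)), #X + r ≤ m → θ + unplayedDummies K X ≤ w + r →
      -1 + 2 / (m : ℝ) ^ r ≤ gval m m (gammaWinProb m K) (gammaUtility θ) r X X w
  | 0, w, X, _, hθ => by
    rw [gval, gammaUtility, if_pos (by omega)]
    norm_num
  | r + 1, w, X, hX, hθ => by
    obtain ⟨j₀, hj₀⟩ : Xᶜ.Nonempty := by
      rw [← card_pos, card_compl, Fintype.card_fin]; omega
    have hcopy (j : Fin m) (hj : j ∉ X) : -1 + 2 / (m : ℝ) ^ r ≤
        stagePayoff (gammaWinProb m K) (gammaUtility θ) r X X w j j := by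
      have hX' : #(insert j X) + r ≤ m := by rw [card_insert_of_notMem hj]; omega
      by_cases hjK : (j : ℕ) < K
      · have hd := unplayedDummies_insert_le K X j
        simpa [stagePayoff, gammaWinProb, hjK] using
          neg_one_add_two_div_pow_le_gval_gamma r (w + 1) (insert j X) hX' (by omega)
      · have hd := unplayedDummies_insert_lt K (not_lt.mp hjK) hj
        simpa [stagePayoff, gammaWinProb, hjK] using
          neg_one_add_two_div_pow_le_gval_gamma r w (insert j X) hX' (by omega)
    have h := neg_one_add_div_le_gval_succ (gammaWinProb_mem_Icc K) (gammaUtility_mem_Icc θ)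
      (by positivity) ⟨j₀, mem_compl.mp hj₀⟩ fun j hj => ⟨j, hj, hcopy j hj⟩
    rwa [div_div, ← pow_succ] at h

end Gamma

theorem gamma_game_value_gt_general (C a b : ℕ)
    (ha : a ≤ (C + 1) / 2) (hb : b ≤ C / 2) :
    gval ((C - a) + (C / 2 - b)) ((C - a) + (C / 2 - b))
      (fun i j => if (i : ℕ) = (j : ℕ) ∧ (i : ℕ) < C - a then (1 : ℝ) else 0)
      (fun t => if (C + 1) / 2 - a ≤ t then (1 : ℝ) else -1)
      (C - a - b) ∅ ∅ 0 > -1 := by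
  have hbound := neg_one_add_two_div_pow_le_gval_gamma (m := (C - a) + (C / 2 - b)) (C - a)
    ((C + 1) / 2 - a) (C - a - b) 0 ∅ (by rw [card_empty]; omega) (by rw [unplayedDummies_empty]; omega)
  have hpos : (0 : ℝ) < 2 / (((C - a) + (C / 2 - b) : ℕ) : ℝ) ^ (C - a - b) := by
    rcases Nat.eq_zero_or_pos (C - a - b) with hT | hT
    · simp [hT]
    · exact div_pos two_pos (pow_pos (Nat.cast_pos.mpr (by omega)) _)
  exact lt_of_lt_of_le (by linarith) hbound

/-- (Lemma on the games `Γ^C_{a,b}`.)  For integers `C ≥ 1`,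
`0 ≤ a ≤ ⌈C/2⌉`, `0 ≤ b ≤ ⌊C/2⌋`, the game `Γ^C_{a,b}` with
`m = n = (C-a) + (⌊C/2⌋-b)` players on each side, `T = C-a-b` rounds,
`P i j = 1` iff `i = j ≤ C-a`, and utility `1` if Team 1 wins at least
`⌈C/2⌉-a` rounds and `-1` otherwise, has value strictly greater than `-1`. -/
theorem gamma_game_value_gt (C a b : ℕ) (hC : 1 ≤ C)
    (ha : a ≤ (C + 1) / 2) (hb : b ≤ C / 2) :
    gval ((C - a) + (C / 2 - b)) ((C - a) + (C / 2 - b))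
      (fun i j => if (i : ℕ) = (j : ℕ) ∧ (i : ℕ) < C - a then (1 : ℝ) else 0)
      (fun t => if (C + 1) / 2 - a ≤ t then (1 : ℝ) else -1)
      (C - a - b) ∅ ∅ 0 > -1 :=
  gamma_game_value_gt_general C a b ha hb
end

section
/- Let U = U_M and let P be an m×n matrix with entries in [0,1], m ≥ T ≥ 1, n ≥ T, such that at least ⌊T/2⌋ of the rows of P are identically zero. Let P' be the (m+1)×n matrix obtained from P by appending one additional all-zero row. Then V(G(T,P',U_M)) = V(G(T,P,U_M)); i.e., under U_M, recruiting a (⌊T/2⌋+1)-th dominated player gives no advantage over ⌊T/2⌋ dominated players. -/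
/-- The utility function `U_M(t)`: `1` if `t > T/2`, `0` if `t = T/2`, `-1` if `t < T/2`. -/
def UM (T : ℕ) : ℕ → ℝ := fun t => if T < 2 * t then 1 else if 2 * t = T then 0 else -1

/-!
Dominated players always lose and are interchangeable, so playing the new zero row is, by a
symmetry of the game, the same as playing an unused player of `S`. Hence Team 1 gains nothing from
the new row while some player of `S` is unused, and loses nothing by ignoring it. Once all of `S`
has been fielded, Team 1 has already lost at least `⌊T/2⌋` rounds, so fielding one more dominated
player loses the match: the payoff `-1` is the worst possible, and moving that probability to any
other unused player cannot hurt. Induction on the number of remaining rounds compares the two games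
stage by stage.
-/

open Finset

section StageValue

variable {ι ι' κ : Type*} [Fintype ι] [Fintype ι']

def IsMixedStrategy (X : Finset ι) (p : ι → ℝ) : Prop :=
  (∀ i, 0 ≤ p i) ∧ (∀ i ∈ X, p i = 0) ∧ ∑ i, p i = 1

noncomputable def securityLevel (Y : Finset κ) (E : ι → κ → ℝ) (p : ι → ℝ) : ℝ :=
  ⨅ j : {j // j ∉ Y}, ∑ i, p i * E i j

noncomputable def stageValue (X : Finset ι) (Y : Finset κ) (E : ι → κ → ℝ) : ℝ :=
  ⨆ p : {p // IsMixedStrategy X p}, securityLevel Y E p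

lemma isMixedStrategy_single [DecidableEq ι] {X : Finset ι} {i : ι} (hi : i ∉ X) :
    IsMixedStrategy X (Pi.single i 1) := by
  refine ⟨fun k => ?_, fun k hk => Pi.single_eq_of_ne (ne_of_mem_of_not_mem hk hi) 1, by simp⟩
  by_cases h : k = i <;> simp [h]

namespace IsMixedStrategy

variable {X : Finset ι} {p : ι → ℝ}

lemma nonempty (hX : ∃ i, i ∉ X) : Nonempty {p // IsMixedStrategy X p} := by
  classical
  obtain ⟨i, hi⟩ := hX
  exact ⟨⟨_, isMixedStrategy_single hi⟩⟩

lemma sum_mul_le (hp : IsMixedStrategy X p) {f : ι → ℝ} {c : ℝ} (hf : ∀ i, f i ≤ c) :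
    ∑ i, p i * f i ≤ c :=
  calc ∑ i, p i * f i ≤ ∑ i, p i * c :=
        sum_le_sum fun i _ => mul_le_mul_of_nonneg_left (hf i) (hp.1 i)
    _ = c := by rw [← sum_mul, hp.2.2, one_mul]

lemma le_sum_mul (hp : IsMixedStrategy X p) {f : ι → ℝ} {c : ℝ} (hf : ∀ i, c ≤ f i) :
    c ≤ ∑ i, p i * f i :=
  calc c = ∑ i, p i * c := by rw [← sum_mul, hp.2.2, one_mul]
    _ ≤ ∑ i, p i * f i := sum_le_sum fun i _ => mul_le_mul_of_nonneg_left (hf i) (hp.1 i)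

lemma map_equiv_iff (e : ι ≃ ι') {p : ι' → ℝ} :
    IsMixedStrategy (X.map e.toEmbedding) p ↔ IsMixedStrategy X (p ∘ e) := by
  simp only [IsMixedStrategy, Function.comp_apply, e.sum_comp p, mem_map_equiv,
    ← e.forall_congr_right (q := fun i => e.symm i ∈ X → p i = 0), e.symm_apply_apply,
    ← e.forall_congr_right (q := fun i => 0 ≤ p i)]

end IsMixedStrategy

variable {Y : Finset κ} {E : ι → κ → ℝ}

-- An infimum over an empty index type is `0` in `ℝ`, as is `sInf ∅` in `gval`; hence `a ≤ 0`.
lemma le_securityLevel {X : Finset ι} {p : ι → ℝ} (hp : IsMixedStrategy X p) {a : ℝ}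
    (ha : a ≤ 0) (hE : ∀ i j, a ≤ E i j) : a ≤ securityLevel Y E p :=
  Real.le_iInf (fun j => hp.le_sum_mul fun i => hE i j) ha

lemma stageValue_const {X : Finset ι} (hX : ∃ i, i ∉ X) (hY : ∃ j, j ∉ Y) (c : ℝ) :
    stageValue X Y (fun _ _ => c) = c := by
  have := IsMixedStrategy.nonempty hX
  obtain ⟨j, hj⟩ := hY
  have : Nonempty {j // j ∉ Y} := ⟨⟨j, hj⟩⟩
  have hsec : ∀ p : {p // IsMixedStrategy X p}, securityLevel Y (fun _ _ => c) p.1 = c :=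
    fun p => by simp only [securityLevel, ← sum_mul, p.2.2.2, one_mul, ciInf_const]
  simp only [stageValue, hsec, ciSup_const]

lemma stageValue_map_equiv (e : ι ≃ ι') (X : Finset ι) (Y : Finset κ) (E : ι' → κ → ℝ) :
    stageValue (X.map e.toEmbedding) Y E = stageValue X Y (fun i j => E (e i) j) :=
  Equiv.iSup_congr
    ((e.symm.arrowCongr (Equiv.refl ℝ)).subtypeEquiv fun _ => IsMixedStrategy.map_equiv_iff e)
    fun p => iInf_congr fun j => e.sum_comp fun i => p.1 i * E i j

variable [Finite κ]

lemma securityLevel_mono {E' : ι' → κ → ℝ} {p : ι → ℝ} {p' : ι' → ℝ}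
    (h : ∀ j ∉ Y, ∑ i, p' i * E' i j ≤ ∑ i, p i * E i j) :
    securityLevel Y E' p' ≤ securityLevel Y E p :=
  ciInf_mono (Finite.bddBelow_range _) fun j => h j j.2

lemma securityLevel_le {X : Finset ι} {p : ι → ℝ} (hp : IsMixedStrategy X p) {c : ℝ}
    (hc : 0 ≤ c) (hE : ∀ i j, E i j ≤ c) : securityLevel Y E p ≤ c := by
  rcases isEmpty_or_nonempty {j // j ∉ Y} with hY | ⟨⟨j⟩⟩
  · rw [securityLevel, Real.iInf_of_isEmpty]; exact hc
  · exact ciInf_le_of_le (Finite.bddBelow_range _) j (hp.sum_mul_le fun i => hE i j)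

lemma bddAbove_range_securityLevel (X : Finset ι) :
    BddAbove (Set.range fun p : {p // IsMixedStrategy X p} => securityLevel Y E p) := by
  obtain ⟨c, hc⟩ := Finite.exists_le fun x : ι × κ => E x.1 x.2
  exact ⟨max c 0, Set.forall_mem_range.2 fun p =>
    securityLevel_le p.2 (le_max_right _ _) fun i j => (hc (i, j)).trans (le_max_left _ _)⟩

lemma stageValue_le_stageValue {X : Finset ι} {X' : Finset ι'} {E' : ι' → κ → ℝ}
    (hX' : ∃ i, i ∉ X')
    (h : ∀ p', IsMixedStrategy X' p' →
      ∃ p, IsMixedStrategy X p ∧ ∀ j ∉ Y, ∑ i, p' i * E' i j ≤ ∑ i, p i * E i j) :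
    stageValue X' Y E' ≤ stageValue X Y E := by
  have := IsMixedStrategy.nonempty hX'
  refine ciSup_le fun p' => ?_
  obtain ⟨p, hp, hle⟩ := h p'.1 p'.2
  exact le_ciSup_of_le (bddAbove_range_securityLevel X) ⟨p, hp⟩ (securityLevel_mono hle)

lemma le_stageValue {X : Finset ι} {a : ℝ} (ha : a ≤ 0) (hE : ∀ i j, a ≤ E i j) :
    a ≤ stageValue X Y E := by
  rcases isEmpty_or_nonempty {p // IsMixedStrategy X p} with hX | ⟨⟨p⟩⟩
  · rw [stageValue, Real.iSup_of_isEmpty]; exact ha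
  · exact le_ciSup_of_le (bddAbove_range_securityLevel X) p (le_securityLevel p.2 ha hE)

end StageValue

section Snoc

variable {m : ℕ} {κ : Type*} [Finite κ] {X : Finset (Fin m)} {Y : Finset κ}
  {E : Fin m → κ → ℝ} {E' : Fin (m + 1) → κ → ℝ}

lemma exists_notMem_of_card_lt (h : X.card < m) : ∃ i, i ∉ X := by
  simpa using exists_mem_notMem_of_card_lt_card (t := univ) (by simpa using h)

lemma map_castSuccEmb_insert (i : Fin m) (X : Finset (Fin m)) :
    (insert i X).map Fin.castSuccEmb = insert i.castSucc (X.map Fin.castSuccEmb) :=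
  map_insert _ _ _

lemma IsMixedStrategy.snoc {p : Fin m → ℝ} (hp : IsMixedStrategy X p) :
    IsMixedStrategy (X.map Fin.castSuccEmb) (Fin.snoc p 0) := by
  refine ⟨Fin.lastCases (by simp) fun i => by simpa using hp.1 i, ?_,
    by simpa [Fin.sum_univ_castSucc] using hp.2.2⟩
  simpa using hp.2.1

lemma IsMixedStrategy.castSucc_add_ite_last {p : Fin (m + 1) → ℝ}
    (hp : IsMixedStrategy (X.map Fin.castSuccEmb) p) {k : Fin m} (hk : k ∉ X) :
    IsMixedStrategy X fun i => p i.castSucc + if i = k then p (Fin.last m) else 0 := by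
  refine ⟨fun i => add_nonneg (hp.1 _) ?_, fun i hi => ?_, ?_⟩
  · split_ifs <;> simp [hp.1]
  · simp only [hp.2.1 i.castSucc (by simpa using hi), if_neg (ne_of_mem_of_not_mem hi hk),
      add_zero]
  · simpa [sum_add_distrib, Fin.sum_univ_castSucc] using hp.2.2

lemma le_stageValue_snoc (hX : ∃ i, i ∉ X) (h : ∀ i j, E i j ≤ E' i.castSucc j) :
    stageValue X Y E ≤ stageValue (X.map Fin.castSuccEmb) Y E' :=
  stageValue_le_stageValue hX fun p hp => ⟨Fin.snoc p 0, hp.snoc, fun j _ => by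
    simp only [Fin.sum_univ_castSucc, Fin.snoc_castSucc, Fin.snoc_last, zero_mul, add_zero]
    exact sum_le_sum fun i _ => mul_le_mul_of_nonneg_left (h i j) (hp.1 i)⟩

lemma stageValue_snoc_le {k : Fin m} (hk : k ∉ X) (hcast : ∀ i j, E' i.castSucc j ≤ E i j)
    (hlast : ∀ j, E' (Fin.last m) j ≤ E k j) :
    stageValue (X.map Fin.castSuccEmb) Y E' ≤ stageValue X Y E :=
  stageValue_le_stageValue ⟨Fin.last m, by simp⟩ fun p hp =>
    ⟨_, hp.castSucc_add_ite_last hk, fun j _ =>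
      calc ∑ i, p i * E' i j
          = ∑ i : Fin m, p i.castSucc * E' i.castSucc j + p (Fin.last m) * E' (Fin.last m) j :=
            Fin.sum_univ_castSucc _
        _ ≤ ∑ i : Fin m, p i.castSucc * E i j + p (Fin.last m) * E k j :=
            add_le_add (sum_le_sum fun i _ => mul_le_mul_of_nonneg_left (hcast i j) (hp.1 _))
              (mul_le_mul_of_nonneg_left (hlast j) (hp.1 _))
        _ = ∑ i, (p i.castSucc + if i = k then p (Fin.last m) else 0) * E i j := by
            simp [add_mul, sum_add_distrib]⟩

end Snoc

section Game

variable {m n : ℕ} (P : Fin m → Fin n → ℝ) (U : ℕ → ℝ)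

noncomputable def matchValue (r : ℕ) (X : Finset (Fin m)) (Y : Finset (Fin n)) (w : ℕ)
    (i : Fin m) (j : Fin n) : ℝ :=
  P i j * gval m n P U r (insert i X) (insert j Y) (w + 1) +
    (1 - P i j) * gval m n P U r (insert i X) (insert j Y) w

lemma gval_succ_s18 (r : ℕ) (X : Finset (Fin m)) (Y : Finset (Fin n)) (w : ℕ) :
    gval m n P U (r + 1) X Y w = stageValue X Y (matchValue P U r X Y w) := by
  have hinf : ∀ p : Fin m → ℝ, securityLevel Y (matchValue P U r X Y w) p =
      sInf {u | ∃ j, j ∉ Y ∧ u = ∑ i, p i * matchValue P U r X Y w i j} := fun p => by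
    rw [securityLevel, iInf]
    congr 1
    ext u
    simp only [Set.mem_range, eq_comm, Subtype.exists, exists_prop, Set.mem_ofPred_eq]
  rw [gval, stageValue, iSup]
  congr 1
  ext v
  simp only [Set.mem_ofPred_eq, IsMixedStrategy, hinf, matchValue, Set.mem_range, eq_comm,
    Subtype.exists, exists_prop, and_assoc]

lemma matchValue_of_eq_zero {r : ℕ} {X : Finset (Fin m)} {Y : Finset (Fin n)} {w : ℕ}
    {i : Fin m} {j : Fin n} (h : P i j = 0) :
    matchValue P U r X Y w i j = gval m n P U r (insert i X) (insert j Y) w := by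
  simp [matchValue, h]

lemma le_matchValue {a : ℝ} (hP : ∀ i j, P i j ∈ Set.Icc (0 : ℝ) 1) {r : ℕ}
    {X : Finset (Fin m)} {Y : Finset (Fin n)} {w : ℕ} {i : Fin m} {j : Fin n}
    (h₁ : a ≤ gval m n P U r (insert i X) (insert j Y) (w + 1))
    (h₀ : a ≤ gval m n P U r (insert i X) (insert j Y) w) :
    a ≤ matchValue P U r X Y w i j := by
  obtain ⟨hp₀, hp₁⟩ := hP i j
  unfold matchValue
  nlinarith

lemma le_gval {a : ℝ} (ha : a ≤ 0) (hU : ∀ t, a ≤ U t) (hP : ∀ i j, P i j ∈ Set.Icc (0 : ℝ) 1)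
    (r : ℕ) : ∀ X Y w, a ≤ gval m n P U r X Y w := by
  induction r with
  | zero => exact fun _ _ w => hU w
  | succ r ih =>
    intro X Y w
    rw [gval_succ_s18]
    exact le_stageValue ha fun i j => le_matchValue P U hP (ih _ _ _) (ih _ _ _)

lemma gval_eq_of_forall_le {c : ℝ} (r : ℕ) :
    ∀ X Y w, X.card + r ≤ m → Y.card + r ≤ n → (∀ t ≤ w + r, U t = c) →
      gval m n P U r X Y w = c := by
  induction r with
  | zero => exact fun _ _ w _ _ hU => hU w le_rfl
  | succ r ih =>
    intro X Y w hX hY hU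
    have hmatch : matchValue P U r X Y w = fun _ _ => c := by
      ext i j
      have hXi := card_insert_le i X
      have hYj := card_insert_le j Y
      rw [matchValue, ih _ _ _ (by omega) (by omega) fun t ht => hU t (by omega),
        ih _ _ _ (by omega) (by omega) fun t ht => hU t (by omega)]
      ring
    rw [gval_succ_s18, hmatch, stageValue_const (exists_notMem_of_card_lt (by omega))
      (exists_notMem_of_card_lt (by omega))]

lemma gval_map_perm (σ : Equiv.Perm (Fin m)) (hσ : ∀ i, P (σ i) = P i) (r : ℕ) :
    ∀ X Y w, gval m n P U r (X.map σ.toEmbedding) Y w = gval m n P U r X Y w := by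
  induction r with
  | zero => exact fun _ _ _ => rfl
  | succ r ih =>
    intro X Y w
    rw [gval_succ_s18, gval_succ_s18, stageValue_map_equiv]
    congr 1
    ext i j
    have hins : insert (σ i) (X.map σ.toEmbedding) = (insert i X).map σ.toEmbedding :=
      (map_insert _ _ _).symm
    simp only [matchValue, hσ, hins, ih]

lemma le_gval_snoc (q : Fin n → ℝ) (hP : ∀ i j, P i j ∈ Set.Icc (0 : ℝ) 1) (r : ℕ) :
    ∀ X Y w, X.card + r ≤ m →
      gval m n P U r X Y w ≤ gval (m + 1) n (Fin.snoc P q) U r (X.map Fin.castSuccEmb) Y w := by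
  induction r with
  | zero => exact fun _ _ _ _ => le_rfl
  | succ r ih =>
    intro X Y w hX
    rw [gval_succ_s18, gval_succ_s18]
    refine le_stageValue_snoc (exists_notMem_of_card_lt (by omega)) fun i j => ?_
    have hXi := card_insert_le i X
    simp only [matchValue, Fin.snoc_castSucc, ← map_castSuccEmb_insert]
    obtain ⟨h0, h1⟩ := hP i j
    have h1' : 0 ≤ 1 - P i j := sub_nonneg.2 h1
    gcongr <;> exact ih _ _ _ (by omega)

lemma gval_snoc_insert_last {q : Fin n → ℝ} {s : Fin m} (hs : P s = q) {X : Finset (Fin m)}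
    (hsX : s ∉ X) (r : ℕ) (Y : Finset (Fin n)) (w : ℕ) :
    gval (m + 1) n (Fin.snoc P q) U r (insert (Fin.last m) (X.map Fin.castSuccEmb)) Y w =
      gval (m + 1) n (Fin.snoc P q) U r ((insert s X).map Fin.castSuccEmb) Y w := by
  set σ := Equiv.swap s.castSucc (Fin.last m)
  have hσ : ∀ i, (Fin.snoc P q : Fin (m + 1) → Fin n → ℝ) (σ i) =
      (Fin.snoc P q : Fin (m + 1) → Fin n → ℝ) i := by
    intro i
    rcases eq_or_ne i s.castSucc with rfl | h1
    · simp [σ, hs]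
    rcases eq_or_ne i (Fin.last m) with rfl | h2
    · simp [σ, hs]
    rw [Equiv.swap_apply_of_ne_of_ne h1 h2]
  have hfix : (X.map Fin.castSuccEmb).map σ.toEmbedding = X.map Fin.castSuccEmb := by
    rw [map_eq_image, image_congr (g := id), image_id]
    simp only [Set.EqOn, coe_map, Set.mem_image, mem_coe, Fin.coe_castSuccEmb,
      forall_exists_index, and_imp, forall_apply_eq_imp_iff₂]
    intro x hx
    exact Equiv.swap_apply_of_ne_of_ne
      (Fin.castSucc_injective m |>.ne (ne_of_mem_of_not_mem hx hsX)) (Fin.castSucc_lt_last x).ne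
  rw [← gval_map_perm _ U σ hσ, map_castSuccEmb_insert, map_insert, hfix]
  simp [σ]

end Game

lemma neg_one_le_UM (T t : ℕ) : -1 ≤ UM T t := by
  unfold UM
  split_ifs <;> norm_num

lemma UM_of_two_mul_lt {T t : ℕ} (h : 2 * t < T) : UM T t = -1 := by
  rw [UM, if_neg (by omega), if_neg (by omega)]

lemma card_insert_inter_le {α : Type*} [DecidableEq α] (a : α) (X S : Finset α) :
    (insert a X ∩ S).card ≤ (X ∩ S).card + 1 :=
  (card_le_card fun x => by simp only [mem_inter, mem_insert]; tauto).trans (card_insert_le _ _)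

lemma matchValue_snoc_zero_last_le {T m n r : ℕ} {P : Fin m → Fin n → ℝ}
    (hP : ∀ i j, P i j ∈ Set.Icc (0 : ℝ) 1) {X : Finset (Fin m)} {Y : Finset (Fin n)} {w : ℕ}
    (hX : X.card + r ≤ m) (hY : Y.card + r < n) (hlost : 2 * (w + r) < T) (k : Fin m)
    (j : Fin n) :
    matchValue (Fin.snoc P fun _ => 0) (UM T) r (X.map Fin.castSuccEmb) Y w (Fin.last m) j ≤
      matchValue P (UM T) r X Y w k j := by
  have hXl := card_insert_le (Fin.last m) (X.map Fin.castSuccEmb)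
  have hYj := card_insert_le j Y
  rw [card_map] at hXl
  rw [matchValue_of_eq_zero _ _ (by simp), gval_eq_of_forall_le _ _ (c := -1) r _ _ _
    (by omega) (by omega) fun t ht => UM_of_two_mul_lt (by omega)]
  exact le_matchValue _ _ hP (le_gval _ _ (by norm_num) (neg_one_le_UM T) hP _ _ _ _)
    (le_gval _ _ (by norm_num) (neg_one_le_UM T) hP _ _ _ _)

-- The bound on `(X ∩ S).card + w` holds along play because the players of `S` never win.
theorem gval_snoc_zero_le {T m n : ℕ} {P : Fin m → Fin n → ℝ} {S : Finset (Fin m)}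
    (hP : ∀ i j, P i j ∈ Set.Icc (0 : ℝ) 1) (hS : ∀ i ∈ S, ∀ j, P i j = 0)
    (hST : T / 2 ≤ S.card) (r : ℕ) :
    ∀ X Y w, X.card + r ≤ m → Y.card + r ≤ n → (X ∩ S).card + w + r ≤ T →
      gval (m + 1) n (Fin.snoc P fun _ => 0) (UM T) r (X.map Fin.castSuccEmb) Y w ≤
        gval m n P (UM T) r X Y w := by
  induction r with
  | zero => exact fun _ _ _ _ _ _ => le_rfl
  | succ r ih =>
    intro X Y w hX hY hw
    have hYj := fun j => card_insert_le j Y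
    have hcast : ∀ i j, matchValue (Fin.snoc P fun _ => 0) (UM T) r (X.map Fin.castSuccEmb) Y w
        i.castSucc j ≤ matchValue P (UM T) r X Y w i j := by
      intro i j
      have hXi := card_insert_le i X
      have hXSi := card_insert_inter_le i X S
      simp only [matchValue, Fin.snoc_castSucc, ← map_castSuccEmb_insert]
      by_cases hi : i ∈ S
      · simp only [hS i hi j, zero_mul, sub_zero, one_mul, zero_add]
        exact ih _ _ _ (by omega) (by have := hYj j; omega) (by omega)
      · obtain ⟨h0, h1⟩ := hP i j
        have h1' : 0 ≤ 1 - P i j := sub_nonneg.2 h1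
        gcongr <;> exact ih _ _ _ (by omega) (by have := hYj j; omega)
          (by rw [insert_inter_of_notMem hi]; omega)
    obtain ⟨k, hk, hlast⟩ : ∃ k ∉ X, ∀ j, matchValue (Fin.snoc P fun _ => 0) (UM T) r
        (X.map Fin.castSuccEmb) Y w (Fin.last m) j ≤ matchValue P (UM T) r X Y w k j := by
      by_cases hSX : ∃ s ∈ S, s ∉ X
      · obtain ⟨s, hs, hsX⟩ := hSX
        refine ⟨s, hsX, fun j => ?_⟩
        rw [matchValue_of_eq_zero _ _ (by simp), matchValue_of_eq_zero _ _ (hS s hs j),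
          gval_snoc_insert_last _ _ (funext (hS s hs)) hsX]
        have := card_insert_inter_le s X S
        exact ih _ _ _ (by have := card_insert_le s X; omega) (by have := hYj j; omega) (by omega)
      · push Not at hSX
        rw [inter_eq_right.2 hSX] at hw
        obtain ⟨k, hk⟩ := exists_notMem_of_card_lt (show X.card < m by omega)
        exact ⟨k, hk, matchValue_snoc_zero_last_le hP (by omega) (by omega) (by omega) k⟩
    rw [gval_succ_s18, gval_succ_s18]
    exact stageValue_snoc_le hk hcast hlast

theorem no_gain_from_extra_dominated_UM_general (T m n : ℕ) (hm : T ≤ m) (hn : T ≤ n)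
    (P : Fin m → Fin n → ℝ) (hP : ∀ i j, P i j ∈ Set.Icc (0 : ℝ) 1)
    (hzero : ∃ S : Finset (Fin m), T / 2 ≤ S.card ∧ ∀ i ∈ S, ∀ j, P i j = 0) :
    gval (m + 1) n (Fin.snoc P (fun _ => (0 : ℝ))) (UM T) T ∅ ∅ 0 =
      gval m n P (UM T) T ∅ ∅ 0 := by
  obtain ⟨S, hST, hS⟩ := hzero
  refine le_antisymm ?_ ?_
  · simpa using gval_snoc_zero_le hP hS hST T ∅ ∅ 0 (by simpa) (by simpa) (by simp)
  · simpa using le_gval_snoc P (UM T) _ hP T ∅ ∅ 0 (by simpa)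

/-- Under `U_M`, if Team 1 already has at least `⌊T/2⌋` dominated
players (all-zero rows of `P`), then appending one more all-zero row to `P` does not
change the value of the game: a `(⌊T/2⌋+1)`-th dominated player gives no advantage
over `⌊T/2⌋` of them. -/
theorem no_gain_from_extra_dominated_UM (T m n : ℕ) (hT : 1 ≤ T) (hm : T ≤ m) (hn : T ≤ n)
    (P : Fin m → Fin n → ℝ) (hP : ∀ i j, P i j ∈ Set.Icc (0 : ℝ) 1)
    (hzero : ∃ S : Finset (Fin m), T / 2 ≤ S.card ∧ ∀ i ∈ S, ∀ j, P i j = 0) :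
    gval (m + 1) n (Fin.snoc P (fun _ => (0 : ℝ))) (UM T) T ∅ ∅ 0 =
      gval m n P (UM T) T ∅ ∅ 0 :=
  no_gain_from_extra_dominated_UM_general T m n hm hn P hP hzero
end
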